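/- arXiv:2012.02662 — 3 statements merged into one kernel-verified Lean document; each statement's English description precedes it below -/
import Mathlib

section
/- Let b > 1 and P ≥ 1 be reals with (1+bP)^2 > 4P. Define λ(P) = ((1+bP) - sqrt((1+bP)^2 - 4P))/2. Then b·λ(P) < 1. -/
theorem b_mul_lambda_lt_one (b P : ℝ) (hb : 1 < b) (hP : 1 ≤ P)
    (hdisc : (1 + b * P) ^ 2 > 4 * P) :
    b * (((1 + b * P) - Real.sqrt ((1 + b * P) ^ 2 - 4 * P)) / 2) < 1 := by
  have hb0 : (0:ℝ) < b := by linarith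
  have hkey : (1 + b * P - 2 / b) < Real.sqrt ((1 + b * P) ^ 2 - 4 * P) := by
    rw [show (1 + b * P) ^ 2 - 4 * P = ((1 + b * P) ^ 2 - 4 * P) from rfl]
    have hx : (0:ℝ) ≤ 1 + b * P - 2 / b := by
      rw [sub_nonneg, div_le_iff₀ hb0]; nlinarith [mul_le_mul_of_nonneg_left hP (mul_pos hb0 hb0).le]
    rw [Real.lt_sqrt hx]
    have h2 : (2 / b) * b = 2 := div_mul_cancel₀ 2 (ne_of_gt hb0)
    have ht0 : (0:ℝ) < 2 / b := by positivity
    have ht2 : 2 / b < 2 := by rw [div_lt_iff₀ hb0]; nlinarith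
    have h3 : (2 / b) * b * P = 2 * P := by rw [h2]
    nlinarith [mul_pos ht0 (sub_pos.mpr ht2)]
  have : (1 + b * P) - Real.sqrt ((1 + b * P) ^ 2 - 4 * P) < 2 / b := by linarith
  calc b * (((1 + b * P) - Real.sqrt ((1 + b * P) ^ 2 - 4 * P)) / 2)
      < b * ((2 / b) / 2) := by
        apply mul_lt_mul_of_pos_left _ hb0
        linarith
    _ = 1 := by field_simp
end

section
/- Let b > 1 and P ≥ 1 with (1+bP)^2 > 4P, and λ(P) = ((1+bP) - sqrt((1+bP)^2 - 4P))/2. Then λ is strictly increasing in P, i.e., λ'(P) > 0. -/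
theorem lambda_deriv_pos (b P : ℝ) (hb : 1 < b) (hP : 1 ≤ P)
    (hdisc : (1 + b * P) ^ 2 > 4 * P) (d : ℝ)
    (hderiv : HasDerivAt
      (fun P : ℝ => ((1 + b * P) - Real.sqrt ((1 + b * P) ^ 2 - 4 * P)) / 2) d P) :
    0 < d := by
  have hg : (0:ℝ) < (1 + b * P) ^ 2 - 4 * P := by linarith
  set s := Real.sqrt ((1 + b * P) ^ 2 - 4 * P) with hs_def
  have hs : 0 < s := Real.sqrt_pos.mpr hg
  have hs2 : s ^ 2 = (1 + b * P) ^ 2 - 4 * P := Real.sq_sqrt hg.le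
  -- build explicit derivative
  have h1 : HasDerivAt (fun x : ℝ => 1 + b * x) b P := by
    simpa using ((hasDerivAt_id P).const_mul b).const_add 1
  have h2 : HasDerivAt (fun x : ℝ => (1 + b * x) ^ 2 - 4 * x)
      (2 * (1 + b * P) ^ 1 * b - 4) P := by
    exact (h1.pow 2).sub (by simpa using (hasDerivAt_id P).const_mul 4)
  have h3 : HasDerivAt (fun x : ℝ => Real.sqrt ((1 + b * x) ^ 2 - 4 * x))
      ((2 * (1 + b * P) ^ 1 * b - 4) / (2 * s)) P := h2.sqrt (ne_of_gt hg)
  have h4 : HasDerivAt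
      (fun x : ℝ => ((1 + b * x) - Real.sqrt ((1 + b * x) ^ 2 - 4 * x)) / 2)
      ((b - (2 * (1 + b * P) ^ 1 * b - 4) / (2 * s)) / 2) P := (h1.sub h3).div_const 2
  have hd : d = (b - (2 * (1 + b * P) ^ 1 * b - 4) / (2 * s)) / 2 :=
    hderiv.unique h4
  have key : 2 * (1 + b * P) ^ 1 * b - 4 < b * (2 * s) := by
    have hbs : 0 ≤ b * (2 * s) := by positivity
    refine lt_of_pow_lt_pow_left₀ 2 hbs ?_
    nlinarith [hs2, sq_nonneg (b * P - 1), mul_pos hs hs]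
  have hlt : (2 * (1 + b * P) ^ 1 * b - 4) / (2 * s) < b :=
    (div_lt_iff₀ (by positivity)).mpr key
  rw [hd]
  linarith
end

section
/- Let 0 < β < 1, κ > 0, ε > 0, q ∈ (0,1], and let λ ∈ (0,1) be the stable root of λ² − (1 + 1/(βq) + κε/(βq))λ + 1/(βq) = 0. Then λ is strictly decreasing in ε: ∂λ/∂ε < 0. -/
/-! The stable root is `λ = (A - √(A² - 4/(βq)))/2` with `A = 1 + 1/(βq) + κε/(βq)`, which is
affine and increasing in `ε`. As a function of `A`, the smaller root has derivative
`(1 - A/√(A² - 4/(βq)))/2`, negative because `√(A² - 4/(βq)) < A`; the chain rule concludes. -/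

open Real

lemma four_mul_lt_sq_one_add_add {b t : ℝ} (hb : 0 ≤ b) (ht : 0 < t) :
    4 * b < (1 + b + t) ^ 2 := by
  nlinarith [sq_nonneg (1 - b)]

lemma hasDerivAt_sub_sqrt_sq_sub_div_two {c A : ℝ} (h : c < A ^ 2) :
    HasDerivAt (fun x : ℝ => (x - √(x ^ 2 - c)) / 2) ((1 - A / √(A ^ 2 - c)) / 2) A := by
  have hsq : HasDerivAt (fun x : ℝ => x ^ 2 - c) (2 * A) A := by
    simpa using (hasDerivAt_pow 2 A).sub_const c
  have hsqrt := hsq.sqrt (sub_pos.mpr h).ne'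
  refine (((hasDerivAt_id' A).sub hsqrt).div_const 2).congr_deriv ?_
  rw [mul_div_mul_left _ _ two_ne_zero]

lemma one_sub_div_sqrt_sq_sub_neg {c A : ℝ} (hc : 0 < c) (hA : 0 < A) (h : c < A ^ 2) :
    1 - A / √(A ^ 2 - c) < 0 := by
  have hs : 0 < √(A ^ 2 - c) := sqrt_pos.mpr (sub_pos.mpr h)
  have hsA : √(A ^ 2 - c) < A := (sqrt_lt' hA).mpr (by linarith)
  exact sub_neg.mpr ((one_lt_div hs).mpr hsA)

theorem lambda_decreasing_in_eps_general (β κ q ε : ℝ) (hβ : 0 < β)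
    (hκ : 0 < κ) (hq : 0 < q) (hε : 0 < ε) (d : ℝ)
    (hderiv : HasDerivAt
      (fun ε : ℝ =>
        ((1 + 1 / (β * q) + κ * ε / (β * q)) -
          Real.sqrt ((1 + 1 / (β * q) + κ * ε / (β * q)) ^ 2 - 4 / (β * q))) / 2)
      d ε) :
    d < 0 := by
  have hβq : 0 < β * q := mul_pos hβ hq
  set A := 1 + 1 / (β * q) + κ * ε / (β * q)
  have hdisc : 4 / (β * q) < A ^ 2 := by
    have h := four_mul_lt_sq_one_add_add (one_div_pos.mpr hβq).le (div_pos (mul_pos hκ hε) hβq)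
    rwa [mul_one_div] at h
  have hA : 0 < A := by positivity
  have hlin : HasDerivAt (fun ε : ℝ => 1 + 1 / (β * q) + κ * ε / (β * q)) (κ / (β * q)) ε := by
    simpa [mul_div_right_comm] using (((hasDerivAt_id ε).const_mul κ).div_const (β * q)).const_add
      (1 + 1 / (β * q))
  have hcomp := (hasDerivAt_sub_sqrt_sq_sub_div_two hdisc).comp ε hlin
  rw [hderiv.unique hcomp]
  have hroot := one_sub_div_sqrt_sq_sub_neg (div_pos four_pos hβq) hA hdisc
  have hslope : 0 < κ / (β * q) := div_pos hκ hβq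
  exact mul_neg_of_neg_of_pos (div_neg_of_neg_of_pos hroot two_pos) hslope

theorem lambda_decreasing_in_eps (β κ q ε : ℝ) (hβ : 0 < β) (hβ1 : β < 1)
    (hκ : 0 < κ) (hq : 0 < q) (hq1 : q ≤ 1) (hε : 0 < ε) (d : ℝ)
    (hderiv : HasDerivAt
      (fun ε : ℝ =>
        ((1 + 1 / (β * q) + κ * ε / (β * q)) -
          Real.sqrt ((1 + 1 / (β * q) + κ * ε / (β * q)) ^ 2 - 4 / (β * q))) / 2)
      d ε) :
    d < 0 :=
  lambda_decreasing_in_eps_general β κ q ε hβ hκ hq hε d hderiv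
end
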